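/- Fix N > e². Define φ̂⁽⁰⁾(u) = 1/√u on (1/N, 1) and φ̂⁽ᵏ⁾(u) = ∫_{1/N}^1 φ̂⁽ᵏ⁻¹⁾(s)/√(s(s+u)) ds for k ≥ 1. Then for every k ≥ 1 and u ∈ (1/N, 1): φ̂⁽ᵏ⁾(u) ≤ 32^k · (1/√u) · Σ_{i=0}^k (log(e²·N·u))^i / (2^i · i!) ≤ 32^k · e · √N. -/

import Mathlib

/-! Write `L(u) = log (e² N u)`, so that `L ≥ L(1/N) = 2` on `[1/N, 1]`, and let `Eₖ` be the
degree-`k` Taylor polynomial of `exp` (`expPartialSum (k + 1)`). By induction,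
`φ̂⁽ᵏ⁾(u) ≤ 8ᵏ u^(-1/2) Eₖ(L(u)/4)`. In the induction step, split the integral at `s = u`.
For `s ≤ u` the kernel is at most `(su)^(-1/2)`; since `dL = ds/s` and `E'ₖ₊₁ = Eₖ`, this piece
is at most `4 u^(-1/2) Eₖ₊₁(L(u)/4)`. For `s ≥ u` the kernel is at most `1/s`, and
`-4 Eₖ(L(s)/4) s^(-1/2)` has derivative `(2Eₖ - Eₖ₋₁)(L(s)/4) s^(-3/2) ≥ Eₖ(L(s)/4) s^(-3/2)`,
so this piece is at most `4 u^(-1/2) Eₖ(L(u)/4)`. Finally `Eₖ(x/4) ≤ Eₖ(x/2) ≤ e^(x/2)`, and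
`u^(-1/2) e^(L(u)/2) = e √N`. -/

open Real Finset

noncomputable def phiHat (N : ℝ) : ℕ → ℝ → ℝ
  | 0, u => 1 / Real.sqrt u
  | k + 1, u => ∫ s in (1 / N)..1, phiHat N k s / Real.sqrt (s * (s + u))

open MeasureTheory

noncomputable def expPartialSum (n : ℕ) (x : ℝ) : ℝ := ∑ i ∈ range n, x ^ i / i.factorial

section expPartialSum

variable (n : ℕ) {x y : ℝ}

lemma expPartialSum_nonneg (hx : 0 ≤ x) : 0 ≤ expPartialSum n x :=
  sum_nonneg fun _ _ => by positivity

lemma expPartialSum_le_succ (hx : 0 ≤ x) : expPartialSum n x ≤ expPartialSum (n + 1) x := by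
  have : 0 ≤ x ^ n / n.factorial := by positivity
  rw [expPartialSum, expPartialSum, sum_range_succ]
  linarith

lemma expPartialSum_mono (hx : 0 ≤ x) (hxy : x ≤ y) : expPartialSum n x ≤ expPartialSum n y :=
  sum_le_sum fun _ _ => by gcongr

lemma expPartialSum_le_exp (hx : 0 ≤ x) : expPartialSum n x ≤ exp x :=
  sum_le_exp_of_nonneg hx n

lemma continuous_expPartialSum : Continuous (expPartialSum n) := by
  unfold expPartialSum
  fun_prop

lemma hasDerivAt_expPartialSum_succ (x : ℝ) :
    HasDerivAt (expPartialSum (n + 1)) (expPartialSum n x) x := by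
  induction n with
  | zero =>
    have h1 : expPartialSum 1 = fun _ => 1 := by funext x; simp [expPartialSum]
    simpa [h1, expPartialSum] using hasDerivAt_const x (1 : ℝ)
  | succ n ih =>
    have hterm : HasDerivAt (fun x : ℝ => x ^ (n + 1) / (n + 1).factorial)
        (x ^ n / n.factorial) x := by
      refine ((hasDerivAt_pow (n + 1) x).div_const ((n + 1).factorial : ℝ)).congr_deriv ?_
      rw [Nat.factorial_succ]
      push_cast
      field_simp
    have hsplit : expPartialSum (n + 2) =
        fun x => expPartialSum (n + 1) x + x ^ (n + 1) / (n + 1).factorial := by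
      funext x
      exact sum_range_succ _ _
    rw [hsplit, expPartialSum, sum_range_succ]
    exact ih.add hterm

end expPartialSum

section logScale

variable (n : ℕ) {a b c u x : ℝ}

lemma hasDerivAt_expPartialSum_log (hc : c ≠ 0) (hx : x ≠ 0) :
    HasDerivAt (fun s => expPartialSum (n + 1) (log (c * s) / 4))
      (expPartialSum n (log (c * x) / 4) / (4 * x)) x := by
  have hlog : HasDerivAt (fun s => log (c * s) / 4) (c * 1 / (c * x) / 4) x :=
    (((hasDerivAt_id x).const_mul c).log (mul_ne_zero hc hx)).div_const 4
  refine ((hasDerivAt_expPartialSum_succ n _).comp x hlog).congr_deriv ?_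
  field_simp

lemma continuousOn_expPartialSum_log (hc : c ≠ 0) (ha : 0 < a) :
    ContinuousOn (fun s => expPartialSum n (log (c * s) / 4)) (Set.Icc a b) := by
  refine (continuous_expPartialSum n).comp_continuousOn ?_
  refine (ContinuousOn.log (by fun_prop) fun s hs => ?_).div_const 4
  exact mul_ne_zero hc (ha.trans_le hs.1).ne'

lemma log_mul_nonneg_of_le (hca : 1 ≤ c * a) (ha : 0 < a) (hax : a ≤ x) : 0 ≤ log (c * x) :=
  log_nonneg (hca.trans (by nlinarith))

lemma integral_expPartialSum_log_div_le (ha : 0 < a) (hca : 1 ≤ c * a) (hau : a ≤ u) :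
    ∫ s in a..u, expPartialSum n (log (c * s) / 4) / s
      ≤ 4 * expPartialSum (n + 1) (log (c * u) / 4) := by
  have hc : c ≠ 0 := by rintro rfl; simp at hca; linarith
  have hderiv : ∀ x ∈ Set.Icc a u,
      HasDerivAt (fun s => 4 * expPartialSum (n + 1) (log (c * s) / 4))
        (expPartialSum n (log (c * x) / 4) / x) x := fun x hx =>
    ((hasDerivAt_expPartialSum_log n hc (ha.trans_le hx.1).ne').const_mul 4).congr_deriv
      (by field_simp)
  have hint : IntegrableOn (fun s => expPartialSum n (log (c * s) / 4) / s) (Set.Icc a u) :=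
    ((continuousOn_expPartialSum_log n hc ha).div continuousOn_id
      fun s hs => (ha.trans_le hs.1).ne').integrableOn_Icc
  have hG0 : 0 ≤ 4 * expPartialSum (n + 1) (log (c * a) / 4) := by
    have := log_mul_nonneg_of_le hca ha le_rfl
    have := expPartialSum_nonneg (n + 1) (x := log (c * a) / 4) (by positivity)
    positivity
  have := intervalIntegral.integral_le_sub_of_hasDeriv_right_of_le hau
    (fun x hx => (hderiv x hx).continuousAt.continuousWithinAt)
    (fun x hx => (hderiv x (Set.Ioo_subset_Icc_self hx)).hasDerivWithinAt) hint (fun _ _ => le_rfl)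
  linarith

lemma integral_expPartialSum_log_div_sqrt_mul_le (hu : 0 < u) (hcu : 1 ≤ c * u) (hub : u ≤ b) :
    ∫ s in u..b, expPartialSum (n + 1) (log (c * s) / 4) / (√s * s)
      ≤ 4 * expPartialSum (n + 1) (log (c * u) / 4) / √u := by
  have hc : c ≠ 0 := by rintro rfl; simp at hcu; linarith
  set E := fun m s => expPartialSum m (log (c * s) / 4)
  have hE0 : ∀ m, ∀ x ∈ Set.Icc u b, 0 ≤ E m x := fun m x hx =>
    expPartialSum_nonneg m (by have := log_mul_nonneg_of_le hcu hu hx.1; positivity)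
  have hderiv : ∀ x ∈ Set.Icc u b, HasDerivAt (fun s => -(4 * E (n + 1) s / √s))
      ((2 * E (n + 1) x - E n x) / (√x * x)) x := by
    intro x hx
    have hx0 : 0 < x := hu.trans_le hx.1
    have hsx : 0 < √x := sqrt_pos.2 hx0
    refine ((((hasDerivAt_expPartialSum_log n hc hx0.ne').const_mul 4).div
      (hasDerivAt_sqrt hx0.ne') hsx.ne').neg).congr_deriv ?_
    field_simp
    rw [sq_sqrt hx0.le]
    ring
  have hint : IntegrableOn (fun s => E (n + 1) s / (√s * s)) (Set.Icc u b) :=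
    ((continuousOn_expPartialSum_log (n + 1) hc hu).div (by fun_prop)
      fun s hs =>
        (mul_pos (sqrt_pos.2 (hu.trans_le hs.1)) (hu.trans_le hs.1)).ne').integrableOn_Icc
  have hle : ∀ x ∈ Set.Ioo u b,
      E (n + 1) x / (√x * x) ≤ (2 * E (n + 1) x - E n x) / (√x * x) := fun x hx => by
    have hx0 : 0 < x := hu.trans hx.1
    have := expPartialSum_le_succ n (x := log (c * x) / 4)
      (by have := log_mul_nonneg_of_le hcu hu hx.1.le; positivity)
    have := hE0 (n + 1) x (Set.Ioo_subset_Icc_self hx)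
    gcongr
    linarith
  have := intervalIntegral.integral_le_sub_of_hasDeriv_right_of_le hub
    (fun x hx => (hderiv x hx).continuousAt.continuousWithinAt)
    (fun x hx => (hderiv x (Set.Ioo_subset_Icc_self hx)).hasDerivWithinAt) hint hle
  have hGb : 0 ≤ 4 * E (n + 1) b / √b := by
    have := hE0 (n + 1) b ⟨hub, le_rfl⟩
    positivity
  linarith

end logScale

section kernel

variable {p e C s u : ℝ}

lemma sqrt_mul_sqrt_le_sqrt_mul_add (hs : 0 ≤ s) : √s * √u ≤ √(s * (s + u)) := by
  rw [← sqrt_mul hs]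
  exact sqrt_le_sqrt (by nlinarith)

lemma le_sqrt_mul_add (hs : 0 ≤ s) (hu : 0 ≤ u) : s ≤ √(s * (s + u)) :=
  le_sqrt_of_sq_le (by nlinarith)

lemma div_sqrt_mul_add_le_of_le_near (hs : 0 < s) (hu : 0 < u) (hp0 : 0 ≤ p)
    (hp : p ≤ C / √s * e) : p / √(s * (s + u)) ≤ C / √u * (e / s) :=
  calc p / √(s * (s + u)) ≤ C / √s * e / (√s * √u) :=
        div_le_div₀ (hp0.trans hp) hp (by positivity) (sqrt_mul_sqrt_le_sqrt_mul_add hs.le)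
    _ = C / √u * (e / s) := by
        field_simp
        rw [sq_sqrt hs.le]
        ring

lemma div_sqrt_mul_add_le_of_le_far (hs : 0 < s) (hu : 0 ≤ u) (hp0 : 0 ≤ p)
    (hp : p ≤ C / √s * e) : p / √(s * (s + u)) ≤ C * (e / (√s * s)) :=
  calc p / √(s * (s + u)) ≤ C / √s * e / s :=
        div_le_div₀ (hp0.trans hp) hp hs (le_sqrt_mul_add hs.le hu)
    _ = C * (e / (√s * s)) := by ring

end kernel

lemma integral_div_sqrt_mul_add_le_add {ψ g : ℝ → ℝ} {a b C u : ℝ} (ha : 0 < a)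
    (hg : ContinuousOn g (Set.Icc a b)) (hψm : Measurable ψ) (hψ0 : ∀ s ∈ Set.Icc a b, 0 ≤ ψ s)
    (hψ : ∀ s ∈ Set.Icc a b, ψ s ≤ C / √s * g s) (hu : u ∈ Set.Icc a b) :
    ∫ s in a..b, ψ s / √(s * (s + u))
      ≤ C / √u * (∫ s in a..u, g s / s) + C * ∫ s in u..b, g s / (√s * s) := by
  obtain ⟨hau, hub⟩ := hu
  have hu0 : 0 < u := ha.trans_le hau
  have hu_mem : u ∈ Set.uIcc a b := Set.mem_uIcc_of_le hau hub
  have hf_far : ∀ s ∈ Set.Icc a b, ψ s / √(s * (s + u)) ≤ C * (g s / (√s * s)) := fun s hs =>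
    div_sqrt_mul_add_le_of_le_far (ha.trans_le hs.1) hu0.le (hψ0 s hs) (hψ s hs)
  have hfar_int : IntervalIntegrable (fun s => g s / (√s * s)) volume a b :=
    (hg.div (by fun_prop) fun s hs =>
      (mul_pos (sqrt_pos.2 (ha.trans_le hs.1)) (ha.trans_le hs.1)).ne').intervalIntegrable_of_Icc
      (hau.trans hub)
  have hnear_int : IntervalIntegrable (fun s => g s / s) volume a u :=
    ((hg.mono (Set.Icc_subset_Icc_right hub)).div continuousOn_id fun s hs =>
      (ha.trans_le hs.1).ne').intervalIntegrable_of_Icc hau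
  have hf_int : IntervalIntegrable (fun s => ψ s / √(s * (s + u))) volume a b := by
    refine (hfar_int.const_mul C).mono_fun (hψm.div (by fun_prop)).aestronglyMeasurable ?_
    rw [Filter.EventuallyLE, Set.uIoc_of_le (hau.trans hub), ae_restrict_iff' measurableSet_Ioc]
    refine ae_of_all _ fun s hs => ?_
    have hs' : s ∈ Set.Icc a b := Set.Ioc_subset_Icc_self hs
    rw [norm_of_nonneg (div_nonneg (hψ0 s hs') (sqrt_nonneg _))]
    exact (hf_far s hs').trans (le_abs_self _)
  have hf_near_int := hf_int.mono_set (Set.uIcc_subset_uIcc_left hu_mem)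
  have hf_far_int := hf_int.mono_set (Set.uIcc_subset_uIcc_right hu_mem)
  rw [← intervalIntegral.integral_add_adjacent_intervals hf_near_int hf_far_int,
    ← intervalIntegral.integral_const_mul, ← intervalIntegral.integral_const_mul]
  refine add_le_add (intervalIntegral.integral_mono_on hau hf_near_int (hnear_int.const_mul _)
    fun s hs => ?_) (intervalIntegral.integral_mono_on hub hf_far_int
      ((hfar_int.mono_set (Set.uIcc_subset_uIcc_right hu_mem)).const_mul _)
      fun s hs => hf_far s ⟨hau.trans hs.1, hs.2⟩)
  have hsb : s ∈ Set.Icc a b := ⟨hs.1, hs.2.trans hub⟩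
  exact div_sqrt_mul_add_le_of_le_near (ha.trans_le hs.1) hu0 (hψ0 s hsb) (hψ s hsb)

lemma integral_div_sqrt_mul_add_le {ψ : ℝ → ℝ} (n : ℕ) {a b c C u : ℝ} (ha : 0 < a)
    (hca : 1 ≤ c * a) (hC : 0 ≤ C) (hψm : Measurable ψ) (hψ0 : ∀ s ∈ Set.Icc a b, 0 ≤ ψ s)
    (hψ : ∀ s ∈ Set.Icc a b, ψ s ≤ C / √s * expPartialSum (n + 1) (log (c * s) / 4))
    (hu : u ∈ Set.Icc a b) :
    ∫ s in a..b, ψ s / √(s * (s + u))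
      ≤ 8 * C / √u * expPartialSum (n + 2) (log (c * u) / 4) := by
  have hc : c ≠ 0 := by rintro rfl; simp at hca; linarith
  have hu0 : 0 < u := ha.trans_le hu.1
  set E := fun m s => expPartialSum m (log (c * s) / 4)
  have hE : E (n + 1) u ≤ E (n + 2) u := expPartialSum_le_succ (n + 1)
    (by have := log_mul_nonneg_of_le hca ha hu.1; positivity)
  calc ∫ s in a..b, ψ s / √(s * (s + u))
      ≤ C / √u * (∫ s in a..u, E (n + 1) s / s) + C * ∫ s in u..b, E (n + 1) s / (√s * s) :=
        integral_div_sqrt_mul_add_le_add ha (continuousOn_expPartialSum_log (n + 1) hc ha)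
          hψm hψ0 hψ hu
    _ ≤ C / √u * (4 * E (n + 2) u) + C * (4 * E (n + 1) u / √u) := by
        gcongr
        · exact integral_expPartialSum_log_div_le (n + 1) ha hca hu.1
        · exact integral_expPartialSum_log_div_sqrt_mul_le n hu0 (hca.trans (by nlinarith [hu.1]))
            hu.2
    _ ≤ 8 * C / √u * E (n + 2) u := by
        rw [show C / √u * (4 * E (n + 2) u) + C * (4 * E (n + 1) u / √u)
          = 4 * C / √u * (E (n + 2) u + E (n + 1) u) by ring,
          show 8 * C / √u * E (n + 2) u = 4 * C / √u * (2 * E (n + 2) u) by ring]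
        gcongr
        linarith

lemma measurable_phiHat (N : ℝ) : ∀ k, Measurable (phiHat N k)
  | 0 => measurable_const.div measurable_id.sqrt
  | k + 1 => by
    have hF : StronglyMeasurable (Function.uncurry fun u s => phiHat N k s / √(s * (s + u))) :=
      ((measurable_phiHat N k).comp measurable_snd).div
        (measurable_snd.mul (measurable_snd.add measurable_fst)).sqrt |>.stronglyMeasurable
    -- `∫ s in a..b` unfolds to the difference of the integrals over `Ioc a b` and `Ioc b a`.
    exact (hF.integral_prod_right (ν := volume.restrict (Set.Ioc (1 / N) 1))).measurable.sub
      (hF.integral_prod_right (ν := volume.restrict (Set.Ioc 1 (1 / N)))).measurable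

lemma phiHat_nonneg {N : ℝ} (hN : 1 / N ≤ 1) : ∀ k u, 0 ≤ phiHat N k u
  | 0, u => by simp only [phiHat]; positivity
  | k + 1, u => intervalIntegral.integral_nonneg hN fun s _ =>
      div_nonneg (phiHat_nonneg hN k s) (sqrt_nonneg _)

theorem phiHat_le_expPartialSum {N : ℝ} (hN : exp 2 ≤ N) (k : ℕ) {u : ℝ}
    (hu : u ∈ Set.Icc (1 / N) 1) :
    phiHat N k u ≤ 8 ^ k / √u * expPartialSum (k + 1) (log (exp 2 * N * u) / 4) := by
  have hN0 : 0 < N := (exp_pos 2).trans_le hN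
  have he : 1 ≤ exp 2 := one_le_exp (by norm_num)
  have hN1 : 1 / N ≤ 1 := (div_le_one hN0).2 (he.trans hN)
  have hcN : 1 ≤ exp 2 * N * (1 / N) := by field_simp; exact he
  induction k generalizing u with
  | zero => simp [phiHat, expPartialSum]
  | succ k ih =>
    rw [pow_succ, mul_comm _ (8 : ℝ)]
    exact integral_div_sqrt_mul_add_le k (by positivity) hcN (by positivity)
      (measurable_phiHat N k) (fun s _ => phiHat_nonneg hN1 k s) (fun s hs => ih hs) hu

theorem stmt_15_general (N : ℝ) (hN : Real.exp 2 < N) (k : ℕ)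
    (u : ℝ) (hu : u ∈ Set.Ioo (1 / N) 1) :
    phiHat N k u ≤ 32 ^ k * (1 / Real.sqrt u) *
        ∑ i ∈ Finset.range (k + 1),
          (Real.log (Real.exp 2 * N * u)) ^ i / (2 ^ i * (Nat.factorial i : ℝ)) ∧
    32 ^ k * (1 / Real.sqrt u) *
        ∑ i ∈ Finset.range (k + 1),
          (Real.log (Real.exp 2 * N * u)) ^ i / (2 ^ i * (Nat.factorial i : ℝ))
      ≤ 32 ^ k * Real.exp 1 * Real.sqrt N := by
  have hN0 : 0 < N := (exp_pos 2).trans hN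
  have hu0 : 0 < u := (one_div_pos.2 hN0).trans hu.1
  set L := log (exp 2 * N * u)
  have hL : 0 ≤ L := log_nonneg <| by
    have hNu : 1 < u * N := (div_lt_iff₀ hN0).1 hu.1
    nlinarith [one_le_exp (x := 2) (by norm_num)]
  have hsum : ∑ i ∈ range (k + 1), L ^ i / (2 ^ i * (i.factorial : ℝ)) =
      expPartialSum (k + 1) (L / 2) :=
    sum_congr rfl fun i _ => by rw [div_pow, div_div]
  rw [hsum]
  constructor
  · calc phiHat N k u ≤ 8 ^ k / √u * expPartialSum (k + 1) (L / 4) :=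
          phiHat_le_expPartialSum hN.le k (Set.Ioo_subset_Icc_self hu)
      _ ≤ 32 ^ k * (1 / √u) * expPartialSum (k + 1) (L / 2) := by
          rw [div_eq_mul_one_div]
          gcongr
          · exact expPartialSum_nonneg _ (by positivity)
          · norm_num
          · exact expPartialSum_mono _ (by positivity) (by linarith)
  · calc 32 ^ k * (1 / √u) * expPartialSum (k + 1) (L / 2)
          ≤ 32 ^ k * (1 / √u) * exp (L / 2) := by
          gcongr
          exact expPartialSum_le_exp _ (by positivity)
      _ = 32 ^ k * exp 1 * √N := by
          rw [exp_half, exp_log (by positivity), sqrt_mul (by positivity), sqrt_mul (by positivity),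
            show exp 2 = exp 1 ^ 2 by rw [← exp_nat_mul]; norm_num, sqrt_sq (exp_pos 1).le]
          field_simp

theorem stmt_15 (N : ℝ) (hN : Real.exp 2 < N) (k : ℕ) (hk : 1 ≤ k)
    (u : ℝ) (hu : u ∈ Set.Ioo (1 / N) 1) :
    phiHat N k u ≤ 32 ^ k * (1 / Real.sqrt u) *
        ∑ i ∈ Finset.range (k + 1),
          (Real.log (Real.exp 2 * N * u)) ^ i / (2 ^ i * (Nat.factorial i : ℝ)) ∧
    32 ^ k * (1 / Real.sqrt u) *
        ∑ i ∈ Finset.range (k + 1),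
          (Real.log (Real.exp 2 * N * u)) ^ i / (2 ^ i * (Nat.factorial i : ℝ))
      ≤ 32 ^ k * Real.exp 1 * Real.sqrt N :=
  stmt_15_general N hN k u hu
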